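/- arXiv:1512.03666 — 4 statements merged into one kernel-verified Lean document; each statement's English description precedes it below -/
import Mathlib

section
/- If L_q ≠ 0 and L_d·L_f − M_f² ≠ 0, then for every θ ∈ ℝ the matrix 𝔏(θ) is invertible and its inverse is 𝔏(θ)⁻¹ = P(θ) · 𝔏₀⁻¹ · P(θ)ᵀ, where 𝔏₀⁻¹ is the inverse of 𝔏₀. -/
open Matrix Real

/-- The WRSM inductance matrix 𝔏(θ). -/
noncomputable def Lmat (Ld Lq Lf Mf θ : ℝ) : Matrix (Fin 3) (Fin 3) ℝ :=
  !![(Ld + Lq)/2 + (Ld - Lq)/2 * Real.cos (2*θ), (Ld - Lq)/2 * Real.sin (2*θ), Mf * Real.cos θ;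
     (Ld - Lq)/2 * Real.sin (2*θ), (Ld + Lq)/2 - (Ld - Lq)/2 * Real.cos (2*θ), Mf * Real.sin θ;
     Mf * Real.cos θ, Mf * Real.sin θ, Lf]

/-- The Park rotation matrix P(θ). -/
noncomputable def Pmat (θ : ℝ) : Matrix (Fin 3) (Fin 3) ℝ :=
  !![Real.cos θ, -Real.sin θ, 0;
     Real.sin θ, Real.cos θ, 0;
     0, 0, 1]

/-- The rotor-frame inductance matrix 𝔏₀. -/
noncomputable def Lmat0 (Ld Lq Lf Mf : ℝ) : Matrix (Fin 3) (Fin 3) ℝ :=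
  !![Ld, 0, Mf;
     0, Lq, 0;
     Mf, 0, Lf]

lemma Pmat_transpose (θ : ℝ) :
    (Pmat θ)ᵀ = !![Real.cos θ, Real.sin θ, 0;
                   -Real.sin θ, Real.cos θ, 0;
                   0, 0, 1] := by
  ext i j
  fin_cases i <;> fin_cases j <;> simp [Pmat, Matrix.transpose_apply]

lemma Lmat_eq (Ld Lq Lf Mf θ : ℝ) :
    Lmat Ld Lq Lf Mf θ = Pmat θ * Lmat0 Ld Lq Lf Mf * (Pmat θ)ᵀ := by
  have hc := Real.cos_two_mul θ
  have hs := Real.sin_two_mul θ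
  have hp := Real.sin_sq_add_cos_sq θ
  rw [Pmat_transpose]
  ext i j
  fin_cases i <;> fin_cases j <;>
    simp [Lmat, Pmat, Lmat0, Matrix.mul_apply, Fin.sum_univ_succ, Matrix.transpose_apply, hc, hs] <;>
    first
      | nlinarith [hp]
      | linear_combination (-Lq) * hp
      | linear_combination (-Ld) * hp

lemma Pmat_mul_transpose (θ : ℝ) : Pmat θ * (Pmat θ)ᵀ = 1 := by
  have hp := Real.sin_sq_add_cos_sq θ
  rw [Pmat_transpose]
  ext i j
  fin_cases i <;> fin_cases j <;>
    simp [Pmat, Matrix.mul_apply, Fin.sum_univ_succ, Matrix.transpose_apply,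
      Matrix.one_apply] <;> nlinarith [hp]

lemma transpose_mul_Pmat (θ : ℝ) : (Pmat θ)ᵀ * Pmat θ = 1 := by
  have hp := Real.sin_sq_add_cos_sq θ
  rw [Pmat_transpose]
  ext i j
  fin_cases i <;> fin_cases j <;>
    simp [Pmat, Matrix.mul_apply, Fin.sum_univ_succ, Matrix.transpose_apply,
      Matrix.one_apply] <;> nlinarith [hp]

/-- If L_q ≠ 0 and L_d·L_f − M_f² ≠ 0, then for every θ the matrix 𝔏(θ)
is invertible and 𝔏(θ)⁻¹ = P(θ) · 𝔏₀⁻¹ · P(θ)ᵀ. -/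
theorem wrsm_inductance_inverse (Ld Lq Lf Mf : ℝ) (hLq : Lq ≠ 0)
    (hdet : Ld * Lf - Mf ^ 2 ≠ 0) :
    ∀ θ : ℝ, IsUnit (Lmat Ld Lq Lf Mf θ) ∧
      (Lmat Ld Lq Lf Mf θ)⁻¹ = Pmat θ * (Lmat0 Ld Lq Lf Mf)⁻¹ * (Pmat θ)ᵀ := by
  intro θ
  have hdet0 : (Lmat0 Ld Lq Lf Mf).det ≠ 0 := by
    have h : (Lmat0 Ld Lq Lf Mf).det = Lq * (Ld * Lf - Mf ^ 2) := by
      simp [Lmat0, Matrix.det_fin_three]; ring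
    rw [h]; exact mul_ne_zero hLq hdet
  have hU0 : IsUnit (Lmat0 Ld Lq Lf Mf) :=
    (Matrix.isUnit_iff_isUnit_det _).2 (isUnit_iff_ne_zero.2 hdet0)
  have hPU : IsUnit (Pmat θ) := by
    exact (Matrix.isUnit_iff_isUnit_det _).2 (Matrix.isUnit_det_of_right_inverse (B := (Pmat θ)ᵀ) (Pmat_mul_transpose θ))
  have heq := Lmat_eq Ld Lq Lf Mf θ
  have hright : Lmat Ld Lq Lf Mf θ * (Pmat θ * (Lmat0 Ld Lq Lf Mf)⁻¹ * (Pmat θ)ᵀ) = 1 := by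
    rw [heq]
    calc Pmat θ * Lmat0 Ld Lq Lf Mf * (Pmat θ)ᵀ * (Pmat θ * (Lmat0 Ld Lq Lf Mf)⁻¹ * (Pmat θ)ᵀ)
        = Pmat θ * Lmat0 Ld Lq Lf Mf * ((Pmat θ)ᵀ * Pmat θ) * (Lmat0 Ld Lq Lf Mf)⁻¹ * (Pmat θ)ᵀ := by
          noncomm_ring
      _ = Pmat θ * (Lmat0 Ld Lq Lf Mf * (Lmat0 Ld Lq Lf Mf)⁻¹) * (Pmat θ)ᵀ := by
          rw [transpose_mul_Pmat]; noncomm_ring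
      _ = 1 := by rw [Matrix.mul_nonsing_inv _ (isUnit_iff_ne_zero.2 hdet0), Matrix.mul_one,
            Pmat_mul_transpose]
  exact ⟨(Matrix.isUnit_iff_isUnit_det _).2 (Matrix.isUnit_det_of_right_inverse hright), Matrix.inv_eq_right_inv hright⟩
end

section
/- The observability determinant of the wound-rotor synchronous machine satisfies Δ_y = D·ω + N, where D = ((Lδ·i_d + M_f·i_f)² + L_Δ·Lδ·i_q²)/(L_D·L_q) and N = (L_Δ/(L_D·L_q))·((Lδ·di_d + M_f·di_f)·i_q − (Lδ·i_d + M_f·i_f)·di_q). -/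
open Matrix Real

/-- The first entrywise θ-derivative 𝔏'(θ). -/
noncomputable def Lmat' (Ld Lq Mf θ : ℝ) : Matrix (Fin 3) (Fin 3) ℝ :=
  !![-2 * ((Ld - Lq)/2) * Real.sin (2*θ), 2 * ((Ld - Lq)/2) * Real.cos (2*θ), -Mf * Real.sin θ;
     2 * ((Ld - Lq)/2) * Real.cos (2*θ), 2 * ((Ld - Lq)/2) * Real.sin (2*θ), Mf * Real.cos θ;
     -Mf * Real.sin θ, Mf * Real.cos θ, 0]

/-- The second entrywise θ-derivative 𝔏''(θ). -/
noncomputable def Lmat'' (Ld Lq Mf θ : ℝ) : Matrix (Fin 3) (Fin 3) ℝ :=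
  !![-4 * ((Ld - Lq)/2) * Real.cos (2*θ), -4 * ((Ld - Lq)/2) * Real.sin (2*θ), -Mf * Real.cos θ;
     -4 * ((Ld - Lq)/2) * Real.sin (2*θ), 4 * ((Ld - Lq)/2) * Real.cos (2*θ), -Mf * Real.sin θ;
     -Mf * Real.cos θ, -Mf * Real.sin θ, 0]

/-- The entrywise θ-derivative P'(θ). -/
noncomputable def Pmat' (θ : ℝ) : Matrix (Fin 3) (Fin 3) ℝ :=
  !![-Real.sin θ, -Real.cos θ, 0;
     Real.cos θ, -Real.sin θ, 0;
     0, 0, 0]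

/-- The WRSM observability determinant Δ_y, built from the first two (stator) components
of c₁ = −𝔏(θ)⁻¹·𝔏'(θ)·I and c₂ = −𝔏(θ)⁻¹·(𝔏'(θ)·dI + ω·𝔏''(θ)·I), where
I = P(θ)·(i_d, i_q, i_f)ᵀ and dI = P(θ)·(di_d, di_q, di_f)ᵀ + ω·P'(θ)·(i_d, i_q, i_f)ᵀ. -/
noncomputable def deltaY (Ld Lq Lf Mf θ ω i_d i_q i_f di_d di_q di_f : ℝ) : ℝ :=
  let I : Fin 3 → ℝ := Pmat θ *ᵥ ![i_d, i_q, i_f]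
  let dI : Fin 3 → ℝ := Pmat θ *ᵥ ![di_d, di_q, di_f] + ω • (Pmat' θ *ᵥ ![i_d, i_q, i_f])
  let c₁ : Fin 3 → ℝ := -((Lmat Ld Lq Lf Mf θ)⁻¹ *ᵥ (Lmat' Ld Lq Mf θ *ᵥ I))
  let c₂ : Fin 3 → ℝ :=
    -((Lmat Ld Lq Lf Mf θ)⁻¹ *ᵥ (Lmat' Ld Lq Mf θ *ᵥ dI + ω • (Lmat'' Ld Lq Mf θ *ᵥ I)))
  c₁ 0 * c₂ 1 - c₁ 1 * c₂ 0

set_option maxHeartbeats 1000000 in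
set_option maxRecDepth 100000 in
/-- Δ_y = D·ω + N with
D = ((Lδ·i_d + M_f·i_f)² + L_Δ·Lδ·i_q²)/(L_D·L_q) and
N = (L_Δ/(L_D·L_q))·((Lδ·di_d + M_f·di_f)·i_q − (Lδ·i_d + M_f·i_f)·di_q). -/
theorem wrsm_deltaY_formula (Ld Lq Lf Mf : ℝ) (hLf : Lf ≠ 0) (hLq : Lq ≠ 0)
    (hdet : Ld * Lf - Mf ^ 2 ≠ 0) (θ ω i_d i_q i_f di_d di_q di_f : ℝ) :
    deltaY Ld Lq Lf Mf θ ω i_d i_q i_f di_d di_q di_f =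
      (((Ld - Lq) * i_d + Mf * i_f) ^ 2 +
          (Ld - Lq - Mf ^ 2 / Lf) * (Ld - Lq) * i_q ^ 2) / ((Ld - Mf ^ 2 / Lf) * Lq) * ω +
        (Ld - Lq - Mf ^ 2 / Lf) / ((Ld - Mf ^ 2 / Lf) * Lq) *
          (((Ld - Lq) * di_d + Mf * di_f) * i_q - ((Ld - Lq) * i_d + Mf * i_f) * di_q) := by
  have hsc : Real.sin θ ^ 2 + Real.cos θ ^ 2 = 1 := Real.sin_sq_add_cos_sq θ
  have hdet3 : (Lmat Ld Lq Lf Mf θ).det = Lq * (Ld * Lf - Mf ^ 2) := by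
    simp [Lmat, Matrix.det_fin_three, Real.cos_two_mul, Real.sin_two_mul]
    linear_combination ((-1)*Lq*Mf^2 + (-1)*Lq*Mf^2*(Real.cos θ)^2 + (-1)*Lq^2*Lf*(Real.cos θ)^2 + Ld*Mf^2*(Real.cos θ)^2 + 2*Ld*Lq*Lf*(Real.cos θ)^2 + (-1)*Ld^2*Lf*(Real.cos θ)^2) * hsc
  have hU : IsUnit (Lmat Ld Lq Lf Mf θ).det := by
    rw [hdet3]; exact (mul_ne_zero hLq hdet).isUnit
  have key : ∀ x : Fin 3 → ℝ, (Lmat Ld Lq Lf Mf θ)⁻¹ *ᵥ (Lmat Ld Lq Lf Mf θ *ᵥ x) = x := by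
    intro x
    rw [Matrix.mulVec_mulVec, Matrix.nonsing_inv_mul _ hU, Matrix.one_mulVec]
  set k : ℝ := (Ld * Lf - Mf ^ 2) * Lq with hk
  have hk0 : k ≠ 0 := mul_ne_zero hdet hLq
  set V1 : Fin 3 → ℝ := ![Lq*(Lf*(Ld-Lq)-Mf^2)*i_q,
    (Ld*Lf-Mf^2)*((Ld-Lq)*i_d+Mf*i_f), Lq^2*Mf*i_q] with hV1
  set V2 : Fin 3 → ℝ := ![Lq*((Lf*(Ld-Lq)-Mf^2)*di_q - ω*Lf*((Ld-Lq)*i_d+Mf*i_f)),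
    (Ld*Lf-Mf^2)*((Ld-Lq)*di_d+Mf*di_f+ω*(Ld-Lq)*i_q),
    Lq*(Lq*Mf*di_q + ω*Mf*((Ld-Lq)*i_d+Mf*i_f))] with hV2
  have h1 : Lmat Ld Lq Lf Mf θ *ᵥ (Pmat θ *ᵥ V1) =
      k • (Lmat' Ld Lq Mf θ *ᵥ (Pmat θ *ᵥ ![i_d, i_q, i_f])) := by
    funext j
    fin_cases j <;>
      simp [hk, hV1, Lmat, Lmat', Pmat, Matrix.mulVec, dotProduct, Fin.sum_univ_three,
        Real.cos_two_mul, Real.sin_two_mul]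
    · linear_combination ((-1)*Lq^2*Mf^2*i_q*(Real.cos θ) + Lq^3*Lf*i_q*(Real.cos θ) + Ld*Lq*Mf^2*i_q*(Real.cos θ) + (-1)*Ld^2*Lq*Lf*i_q*(Real.cos θ)) * hsc
    · linear_combination ((-1)*Lq*Mf^3*i_f*(Real.cos θ) + (-1)*Lq^2*Mf^2*i_d*(Real.cos θ) + Ld*Mf^3*i_f*(Real.cos θ) + Ld*Lq*Lf*Mf*i_f*(Real.cos θ) + Ld*Lq^2*Lf*i_d*(Real.cos θ) + Ld^2*Mf^2*i_d*(Real.cos θ) + (-1)*Ld^2*Lf*Mf*i_f*(Real.cos θ) + (-1)*Ld^3*Lf*i_d*(Real.cos θ)) * hsc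
    · linear_combination ((-1)*Lq^2*Lf*Mf*i_q) * hsc
  have h2 : Lmat Ld Lq Lf Mf θ *ᵥ (Pmat θ *ᵥ V2) =
      k • (Lmat' Ld Lq Mf θ *ᵥ (Pmat θ *ᵥ ![di_d, di_q, di_f] +
              ω • (Pmat' θ *ᵥ ![i_d, i_q, i_f])) +
           ω • (Lmat'' Ld Lq Mf θ *ᵥ (Pmat θ *ᵥ ![i_d, i_q, i_f]))) := by
    funext j
    fin_cases j <;>
      simp [hk, hV2, Lmat, Lmat', Lmat'', Pmat, Pmat', Matrix.mulVec, dotProduct,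
        Fin.sum_univ_three, Real.cos_two_mul, Real.sin_two_mul]
    · linear_combination ((-1)*Lq^2*Mf^2*di_q*(Real.cos θ) + 2*Lq^2*Mf^2*ω*i_d*(Real.cos θ) + Lq^2*Lf*Mf*ω*i_f*(Real.cos θ) + Lq^3*Lf*di_q*(Real.cos θ) + (-1)*Lq^3*Lf*ω*i_d*(Real.cos θ) + Ld*Lq*Mf^2*di_q*(Real.cos θ) + (-2)*Ld*Lq*Mf^2*ω*i_d*(Real.cos θ) + (-1)*Ld*Lq*Lf*Mf*ω*i_f*(Real.cos θ) + (-1)*Ld^2*Lq*Lf*di_q*(Real.cos θ) + Ld^2*Lq*Lf*ω*i_d*(Real.cos θ)) * hsc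
    · linear_combination ((-1)*Lq*Mf^3*di_f*(Real.cos θ) + (-1)*Lq^2*Mf^2*di_d*(Real.cos θ) + (-1)*Lq^2*Mf^2*ω*i_q*(Real.cos θ) + Ld*Mf^3*di_f*(Real.cos θ) + Ld*Lq*Lf*Mf*di_f*(Real.cos θ) + Ld*Lq^2*Lf*di_d*(Real.cos θ) + Ld*Lq^2*Lf*ω*i_q*(Real.cos θ) + Ld^2*Mf^2*di_d*(Real.cos θ) + Ld^2*Mf^2*ω*i_q*(Real.cos θ) + (-1)*Ld^2*Lf*Mf*di_f*(Real.cos θ) + (-1)*Ld^3*Lf*di_d*(Real.cos θ) + (-1)*Ld^3*Lf*ω*i_q*(Real.cos θ)) * hsc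
    · linear_combination ((-1)*Lq*Lf*Mf^2*ω*i_f + (-1)*Lq^2*Lf*Mf*di_q + Lq^2*Lf*Mf*ω*i_d + (-1)*Ld*Lq*Lf*Mf*ω*i_d) * hsc
  have hc1 : (Lmat Ld Lq Lf Mf θ)⁻¹ *ᵥ
      (Lmat' Ld Lq Mf θ *ᵥ (Pmat θ *ᵥ ![i_d, i_q, i_f])) = k⁻¹ • (Pmat θ *ᵥ V1) := by
    rw [show Lmat' Ld Lq Mf θ *ᵥ (Pmat θ *ᵥ ![i_d, i_q, i_f]) =
          k⁻¹ • (Lmat Ld Lq Lf Mf θ *ᵥ (Pmat θ *ᵥ V1)) from by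
        rw [h1, smul_smul, inv_mul_cancel₀ hk0, one_smul],
      Matrix.mulVec_smul, key]
  have hc2 : (Lmat Ld Lq Lf Mf θ)⁻¹ *ᵥ
      (Lmat' Ld Lq Mf θ *ᵥ (Pmat θ *ᵥ ![di_d, di_q, di_f] +
          ω • (Pmat' θ *ᵥ ![i_d, i_q, i_f])) +
        ω • (Lmat'' Ld Lq Mf θ *ᵥ (Pmat θ *ᵥ ![i_d, i_q, i_f]))) = k⁻¹ • (Pmat θ *ᵥ V2) := by
    rw [show Lmat' Ld Lq Mf θ *ᵥ (Pmat θ *ᵥ ![di_d, di_q, di_f] +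
          ω • (Pmat' θ *ᵥ ![i_d, i_q, i_f])) +
        ω • (Lmat'' Ld Lq Mf θ *ᵥ (Pmat θ *ᵥ ![i_d, i_q, i_f])) =
          k⁻¹ • (Lmat Ld Lq Lf Mf θ *ᵥ (Pmat θ *ᵥ V2)) from by
        rw [h2, smul_smul, inv_mul_cancel₀ hk0, one_smul],
      Matrix.mulVec_smul, key]
  simp only [deltaY, hc1, hc2, Pi.neg_apply, Pi.smul_apply, smul_eq_mul]
  have eP : ∀ p : Fin 3 → ℝ, ∀ j : Fin 3, (Pmat θ *ᵥ p) j =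
      Pmat θ j 0 * p 0 + Pmat θ j 1 * p 1 + Pmat θ j 2 * p 2 := by
    intro p j
    simp [Matrix.mulVec, dotProduct, Fin.sum_univ_three]
  simp only [eP, hV1, hV2, hk]
  simp [Pmat]
  have hLD : Ld - Mf ^ 2 / Lf ≠ 0 := by
    intro h
    apply hdet
    have h2 : Ld * Lf - Mf ^ 2 / Lf * Lf = 0 := by
      rw [← sub_mul, h, zero_mul]
    field_simp at h2
    linarith
  field_simp
  linear_combination ((Lq * (Lf * (Ld - Lq) - Mf ^ 2) * i_q) * ((Ld * Lf - Mf ^ 2) * ((Ld - Lq) * di_d + Mf * di_f + (Ld - Lq) * i_q * ω)) - ((Ld * Lf - Mf ^ 2) * ((Ld - Lq) * i_d + Mf * i_f)) * (Lq * ((Lf * (Ld - Lq) - Mf ^ 2) * di_q - Lf * ((Ld - Lq) * i_d + Mf * i_f) * ω))) * hsc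
end

section
/- High-frequency rotor-current injection restores the rank condition at standstill: suppose ω = 0, di_d = di_q = 0 and the rotor current carries the injected signal i_f(t) = I₀ + A·sin(ω_H·t), so that di_f = A·ω_H·cos(ω_H·t). Then Δ_y = L_Δ·M_f·A·ω_H·cos(ω_H·t)·i_q/(L_D·L_q); in particular, if L_Δ ≠ 0, M_f ≠ 0, A ≠ 0, ω_H ≠ 0, i_q ≠ 0 and cos(ω_H·t) ≠ 0, then Δ_y ≠ 0. -/
open Matrix Real

section KeyLemma

private lemma wrsm_key (Ld Lq Lf Mf : ℝ) (hLq : Lq ≠ 0)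
    (hdet : Ld * Lf - Mf ^ 2 ≠ 0) (θ i_d i_q i_f di_f : ℝ) :
    deltaY Ld Lq Lf Mf θ 0 i_d i_q i_f 0 0 di_f =
      (Lf * (Ld - Lq) - Mf ^ 2) * Mf * di_f * i_q / ((Ld * Lf - Mf ^ 2) * Lq) := by
  have hsc : Real.sin θ ^ 2 + Real.cos θ ^ 2 = 1 := Real.sin_sq_add_cos_sq θ
  have hcos2 : Real.cos (2*θ) = Real.cos θ ^ 2 - Real.sin θ ^ 2 := by
    rw [two_mul θ, Real.cos_add]; ring
  have hsin2 : Real.sin (2*θ) = 2 * (Real.sin θ * Real.cos θ) := by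
    rw [two_mul θ, Real.sin_add]; ring
  set k : ℝ := (Ld * Lf - Mf ^ 2) * Lq with hk
  have hkne : k ≠ 0 := mul_ne_zero hdet hLq
  set v₁ : Fin 3 → ℝ :=
    ![Real.cos θ * (Lq * ((Lf * (Ld - Lq) - Mf ^ 2) * i_q)) -
        Real.sin θ * ((Ld * Lf - Mf ^ 2) * ((Ld - Lq) * i_d + Mf * i_f)),
      Real.sin θ * (Lq * ((Lf * (Ld - Lq) - Mf ^ 2) * i_q)) +
        Real.cos θ * ((Ld * Lf - Mf ^ 2) * ((Ld - Lq) * i_d + Mf * i_f)),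
      Mf * Lq ^ 2 * i_q] with hv₁
  set v₂ : Fin 3 → ℝ :=
    ![-(Real.sin θ * ((Ld * Lf - Mf ^ 2) * (Mf * di_f))),
      Real.cos θ * ((Ld * Lf - Mf ^ 2) * (Mf * di_f)), 0] with hv₂
  have hdet3 : (Lmat Ld Lq Lf Mf θ).det = k := by
    simp [Lmat, Matrix.det_fin_three]
    simp only [hcos2, hsin2, hk]
    linear_combination ((-1 : ℝ)*Lq*Mf^2 + (-1/2 : ℝ)*Lq*Mf^2*(Real.cos θ)^2 + (-1/2 : ℝ)*Lq*Mf^2*(Real.sin θ)^2 + (-1/4 : ℝ)*Lq^2*Lf + (-1/4 : ℝ)*Lq^2*Lf*(Real.cos θ)^2 + (-1/4 : ℝ)*Lq^2*Lf*(Real.sin θ)^2 + (1/2 : ℝ)*Ld*Mf^2*(Real.cos θ)^2 + (1/2 : ℝ)*Ld*Mf^2*(Real.sin θ)^2 + (1/2 : ℝ)*Ld*Lq*Lf + (1/2 : ℝ)*Ld*Lq*Lf*(Real.cos θ)^2 + (1/2 : ℝ)*Ld*Lq*Lf*(Real.sin θ)^2 + (-1/4 : ℝ)*Ld^2*Lf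 + (-1/4 : ℝ)*Ld^2*Lf*(Real.cos θ)^2 + (-1/4 : ℝ)*Ld^2*Lf*(Real.sin θ)^2) * hsc
  have hU : IsUnit (Lmat Ld Lq Lf Mf θ).det := by
    rw [hdet3]; exact hkne.isUnit
  have hinv : (Lmat Ld Lq Lf Mf θ)⁻¹ * Lmat Ld Lq Lf Mf θ = 1 :=
    Matrix.nonsing_inv_mul _ hU
  have hA : Lmat Ld Lq Lf Mf θ *ᵥ v₁ =
      k • (Lmat' Ld Lq Mf θ *ᵥ (Pmat θ *ᵥ ![i_d, i_q, i_f])) := by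
    funext j
    fin_cases j
    · show (Lmat Ld Lq Lf Mf θ *ᵥ v₁) 0 = (k • (Lmat' Ld Lq Mf θ *ᵥ (Pmat θ *ᵥ ![i_d, i_q, i_f]))) 0
      simp [Lmat, Lmat', Pmat, Matrix.mulVec, dotProduct, Fin.sum_univ_three, hv₁]
      simp only [hcos2, hsin2, hk]
      linear_combination ((1/2 : ℝ)*Lq*Mf^3*(Real.sin θ)*i_f + (-1/2 : ℝ)*Lq^2*Mf^2*(Real.cos θ)*i_q + (1/2 : ℝ)*Lq^2*Mf^2*(Real.sin θ)*i_d + (1/2 : ℝ)*Lq^3*Lf*(Real.cos θ)*i_q + (-1/2 : ℝ)*Ld*Mf^3*(Real.sin θ)*i_f + (1/2 : ℝ)*Ld*Lq*Mf^2*(Real.cos θ)*i_q + (-1/2 : ℝ)*Ld*Lq*Lf*Mf*(Real.sin θ)*i_f + (-1/2 : ℝ)*Ld*Lq^2*Lf*(Real.sin θ)*i_d + (-1/2 : ℝ)*Ld^2*Mf^2*(Real.sin θ)*i_d + (1/2 : ℝ)*Ld^2*Lf*Mf*(Real.sin θ)*i_f + (-1/2 : ℝ)*Ld^2*Lq*Lf*(Real.cos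 θ)*i_q + (1/2 : ℝ)*Ld^3*Lf*(Real.sin θ)*i_d) * hsc
    · show (Lmat Ld Lq Lf Mf θ *ᵥ v₁) 1 = (k • (Lmat' Ld Lq Mf θ *ᵥ (Pmat θ *ᵥ ![i_d, i_q, i_f]))) 1
      simp [Lmat, Lmat', Pmat, Matrix.mulVec, dotProduct, Fin.sum_univ_three, hv₁]
      simp only [hcos2, hsin2, hk]
      linear_combination ((-1/2 : ℝ)*Lq*Mf^3*(Real.cos θ)*i_f + (-1/2 : ℝ)*Lq^2*Mf^2*(Real.cos θ)*i_d + (-1/2 : ℝ)*Lq^2*Mf^2*(Real.sin θ)*i_q + (1/2 : ℝ)*Lq^3*Lf*(Real.sin θ)*i_q + (1/2 : ℝ)*Ld*Mf^3*(Real.cos θ)*i_f + (1/2 : ℝ)*Ld*Lq*Mf^2*(Real.sin θ)*i_q + (1/2 : ℝ)*Ld*Lq*Lf*Mf*(Real.cos θ)*i_f + (1/2 : ℝ)*Ld*Lq^2*Lf*(Real.cos θ)*i_d + (1/2 : ℝ)*Ld^2*Mf^2*(Real.cos θ)*i_d + (-1/2 : ℝ)*Ld^2*Lf*Mf*(Real.cos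 θ)*i_f + (-1/2 : ℝ)*Ld^2*Lq*Lf*(Real.sin θ)*i_q + (-1/2 : ℝ)*Ld^3*Lf*(Real.cos θ)*i_d) * hsc
    · show (Lmat Ld Lq Lf Mf θ *ᵥ v₁) 2 = (k • (Lmat' Ld Lq Mf θ *ᵥ (Pmat θ *ᵥ ![i_d, i_q, i_f]))) 2
      simp [Lmat, Lmat', Pmat, Matrix.mulVec, dotProduct, Fin.sum_univ_three, hv₁]
      simp only [hcos2, hsin2, hk]
      linear_combination ((-1 : ℝ)*Lq^2*Lf*Mf*i_q) * hsc
  have hB : Lmat Ld Lq Lf Mf θ *ᵥ v₂ =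
      k • (Lmat' Ld Lq Mf θ *ᵥ (Pmat θ *ᵥ ![0, 0, di_f])) := by
    funext j
    fin_cases j
    · show (Lmat Ld Lq Lf Mf θ *ᵥ v₂) 0 = (k • (Lmat' Ld Lq Mf θ *ᵥ (Pmat θ *ᵥ ![0, 0, di_f]))) 0
      simp [Lmat, Lmat', Pmat, Matrix.mulVec, dotProduct, Fin.sum_univ_three, hv₂]
      simp only [hcos2, hsin2, hk]
      linear_combination ((1/2 : ℝ)*Lq*Mf^3*(Real.sin θ)*di_f + (-1/2 : ℝ)*Ld*Mf^3*(Real.sin θ)*di_f + (-1/2 : ℝ)*Ld*Lq*Lf*Mf*(Real.sin θ)*di_f + (1/2 : ℝ)*Ld^2*Lf*Mf*(Real.sin θ)*di_f) * hsc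
    · show (Lmat Ld Lq Lf Mf θ *ᵥ v₂) 1 = (k • (Lmat' Ld Lq Mf θ *ᵥ (Pmat θ *ᵥ ![0, 0, di_f]))) 1
      simp [Lmat, Lmat', Pmat, Matrix.mulVec, dotProduct, Fin.sum_univ_three, hv₂]
      simp only [hcos2, hsin2, hk]
      linear_combination ((-1/2 : ℝ)*Lq*Mf^3*(Real.cos θ)*di_f + (1/2 : ℝ)*Ld*Mf^3*(Real.cos θ)*di_f + (1/2 : ℝ)*Ld*Lq*Lf*Mf*(Real.cos θ)*di_f + (-1/2 : ℝ)*Ld^2*Lf*Mf*(Real.cos θ)*di_f) * hsc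
    · show (Lmat Ld Lq Lf Mf θ *ᵥ v₂) 2 = (k • (Lmat' Ld Lq Mf θ *ᵥ (Pmat θ *ᵥ ![0, 0, di_f]))) 2
      simp [Lmat, Lmat', Pmat, Matrix.mulVec, dotProduct, Fin.sum_univ_three, hv₂]
      ring
  have e1 : (Lmat Ld Lq Lf Mf θ)⁻¹ *ᵥ (Lmat' Ld Lq Mf θ *ᵥ (Pmat θ *ᵥ ![i_d, i_q, i_f])) =
      k⁻¹ • v₁ := by
    have h' : Lmat' Ld Lq Mf θ *ᵥ (Pmat θ *ᵥ ![i_d, i_q, i_f]) =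
        Lmat Ld Lq Lf Mf θ *ᵥ (k⁻¹ • v₁) := by
      rw [Matrix.mulVec_smul, hA, smul_smul, inv_mul_cancel₀ hkne, one_smul]
    rw [h', Matrix.mulVec_mulVec, hinv, Matrix.one_mulVec]
  have e2 : (Lmat Ld Lq Lf Mf θ)⁻¹ *ᵥ (Lmat' Ld Lq Mf θ *ᵥ (Pmat θ *ᵥ ![0, 0, di_f])) =
      k⁻¹ • v₂ := by
    have h' : Lmat' Ld Lq Mf θ *ᵥ (Pmat θ *ᵥ ![0, 0, di_f]) =
        Lmat Ld Lq Lf Mf θ *ᵥ (k⁻¹ • v₂) := by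
      rw [Matrix.mulVec_smul, hB, smul_smul, inv_mul_cancel₀ hkne, one_smul]
    rw [h', Matrix.mulVec_mulVec, hinv, Matrix.one_mulVec]
  have hcross : v₁ 0 * v₂ 1 - v₁ 1 * v₂ 0 =
      k * ((Lf * (Ld - Lq) - Mf ^ 2) * Mf * di_f * i_q) := by
    simp only [hv₁, hv₂, hk, Matrix.cons_val_zero, Matrix.cons_val_one, Matrix.head_cons,
      Fin.isValue]
    linear_combination (Lq*Mf^5*i_q*di_f + Lq^2*Lf*Mf^3*i_q*di_f + (-2 : ℝ)*Ld*Lq*Lf*Mf^3*i_q*di_f + (-1 : ℝ)*Ld*Lq^2*Lf^2*Mf*i_q*di_f + Ld^2*Lq*Lf^2*Mf*i_q*di_f) * hsc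
  simp only [deltaY, zero_smul, add_zero, e1, e2]
  simp only [Pi.neg_apply, Pi.smul_apply, smul_eq_mul]
  have expand : -(k⁻¹ * v₁ 0) * -(k⁻¹ * v₂ 1) - -(k⁻¹ * v₁ 1) * -(k⁻¹ * v₂ 0) =
      (v₁ 0 * v₂ 1 - v₁ 1 * v₂ 0) * (k⁻¹ * k⁻¹) := by ring
  rw [expand, hcross]
  field_simp

end KeyLemma


/-- HF rotor-current injection restores the rank condition at standstill:
with ω = 0, di_d = di_q = 0, i_f = I₀ + A·sin(ω_H·t) and di_f = A·ω_H·cos(ω_H·t),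
Δ_y = L_Δ·M_f·A·ω_H·cos(ω_H·t)·i_q/(L_D·L_q); in particular it is nonzero provided
L_Δ ≠ 0, M_f ≠ 0, A ≠ 0, ω_H ≠ 0, i_q ≠ 0 and cos(ω_H·t) ≠ 0. -/
theorem wrsm_hf_injection_observability (Ld Lq Lf Mf : ℝ) (hLf : Lf ≠ 0) (hLq : Lq ≠ 0)
    (hdet : Ld * Lf - Mf ^ 2 ≠ 0) (θ i_d i_q I₀ A ωH t : ℝ) :
    deltaY Ld Lq Lf Mf θ 0 i_d i_q (I₀ + A * Real.sin (ωH * t)) 0 0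
        (A * ωH * Real.cos (ωH * t)) =
      (Ld - Lq - Mf ^ 2 / Lf) * Mf * A * ωH * Real.cos (ωH * t) * i_q /
        ((Ld - Mf ^ 2 / Lf) * Lq) ∧
    (Ld - Lq - Mf ^ 2 / Lf ≠ 0 → Mf ≠ 0 → A ≠ 0 → ωH ≠ 0 → i_q ≠ 0 →
      Real.cos (ωH * t) ≠ 0 →
      deltaY Ld Lq Lf Mf θ 0 i_d i_q (I₀ + A * Real.sin (ωH * t)) 0 0
          (A * ωH * Real.cos (ωH * t)) ≠ 0) := by
  have hkey := wrsm_key Ld Lq Lf Mf hLq hdet θ i_d i_q (I₀ + A * Real.sin (ωH * t))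
    (A * ωH * Real.cos (ωH * t))
  have hD : Ld - Mf ^ 2 / Lf ≠ 0 := by
    intro h
    apply hdet
    have : (Ld - Mf ^ 2 / Lf) * Lf = 0 := by rw [h]; ring
    calc Ld * Lf - Mf ^ 2 = (Ld - Mf ^ 2 / Lf) * Lf := by field_simp
    _ = 0 := this
  have heq : deltaY Ld Lq Lf Mf θ 0 i_d i_q (I₀ + A * Real.sin (ωH * t)) 0 0
      (A * ωH * Real.cos (ωH * t)) =
      (Ld - Lq - Mf ^ 2 / Lf) * Mf * A * ωH * Real.cos (ωH * t) * i_q /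
        ((Ld - Mf ^ 2 / Lf) * Lq) := by
    rw [hkey, div_eq_div_iff (mul_ne_zero hdet hLq) (mul_ne_zero hD hLq)]
    field_simp
  refine ⟨heq, fun h1 h2 h3 h4 h5 h6 => ?_⟩
  rw [heq]
  exact div_ne_zero
    (mul_ne_zero (mul_ne_zero (mul_ne_zero (mul_ne_zero (mul_ne_zero h1 h2) h3) h4) h6) h5)
    (mul_ne_zero hD hLq)
end

section
/- For the non-salient wound-rotor synchronous machine (L_d = L_q, i.e. Lδ = 0), the observability determinant reduces to Δ_y = (M_f²/(L_D·L_q))·(i_f²·ω − (M_f/L_f)·(di_f·i_q − i_f·di_q)). -/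
open Matrix Real

/-- For the non-salient WRSM (L_d = L_q, i.e. Lδ = 0), the observability
determinant reduces to Δ_y = (M_f²/(L_D·L_q))·(i_f²·ω − (M_f/L_f)·(di_f·i_q − i_f·di_q)). -/
theorem nonsalient_wrsm_deltaY (Ld Lq Lf Mf : ℝ) (hLf : Lf ≠ 0) (hLq : Lq ≠ 0)
    (hdet : Ld * Lf - Mf ^ 2 ≠ 0) (hsal : Ld = Lq)
    (θ ω i_d i_q i_f di_d di_q di_f : ℝ) :
    deltaY Ld Lq Lf Mf θ ω i_d i_q i_f di_d di_q di_f =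
      Mf ^ 2 / ((Ld - Mf ^ 2 / Lf) * Lq) *
        (i_f ^ 2 * ω - Mf / Lf * (di_f * i_q - i_f * di_q)) := by
  subst hsal
  have hs : Real.sin θ ^ 2 + Real.cos θ ^ 2 = 1 := Real.sin_sq_add_cos_sq θ
  have hdetval : (Lmat Ld Ld Lf Mf θ).det = Ld * (Ld * Lf - Mf ^ 2) := by
    simp [Lmat, Matrix.det_fin_three]
    linear_combination (-(Ld * Mf^2)) * hs
  have h2 : Ld * (Ld * Lf - Mf ^ 2) ≠ 0 := mul_ne_zero hLq hdet
  simp only [deltaY, Matrix.inv_def, hdetval, Ring.inverse_eq_inv']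
  simp [Lmat, Lmat', Lmat'', Pmat, Pmat', Matrix.adjugate_fin_three, Matrix.mulVec, dotProduct, Fin.sum_univ_succ]
  field_simp
  linear_combination ((-1)*Ld^2*Lf*Mf^3*(Real.sin θ)^2*i_q*di_f + (2)*Ld*Mf^5*(Real.sin θ)^2*(Real.cos θ)^2*i_q*di_f + (-1)*Ld^2*Lf*Mf^3*(Real.cos θ)^2*i_q*di_f + (1)*Ld*Mf^5*(Real.cos θ)^4*i_q*di_f + (-1)*Ld*Mf^5*(Real.sin θ)^4*i_f*di_q + (-2)*Ld*Mf^5*(Real.sin θ)^2*(Real.cos θ)^2*i_f*di_q + (-1)*Ld*Lf*Mf^4*(Real.sin θ)^2*ω*i_f^2 + (1)*Ld^2*Lf*Mf^3*(Real.sin θ)^2*i_f*di_q + (1)*Ld^2*Lf*Mf^3*(Real.cos θ)^2*i_f*di_q + (1)*Ld^2*Lf^2*Mf^2*ω*i_f^2 + (-1)*Ld*Mf^5*(Real.cos θ)^4*i_f*di_q + (-1)*Ld*Lf*Mf^4*(Real.cos θ)^2*ω*i_f^2 + (1)*Ld*Mf^5*(Real.sin θ)^2*i_q*di_f + (-1)*Ld^2*Lf*Mf^3*i_q*di_f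 + (1)*Ld*Mf^5*(Real.cos θ)^2*i_q*di_f + (-1)*Ld*Mf^5*(Real.sin θ)^2*i_f*di_q + (1)*Ld^2*Lf*Mf^3*i_f*di_q + (-1)*Ld*Mf^5*(Real.cos θ)^2*i_f*di_q + (-1)*Ld*Lf*Mf^4*ω*i_f^2 + (1)*Ld*Mf^5*i_q*di_f + (1)*Ld*Mf^5*(Real.sin θ)^4*i_q*di_f + (-1)*Ld*Mf^5*i_f*di_q) * hs
end
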